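/- Let β̂ be any minimizer of L(β) = βᵀ Γ̂ β − 2 βᵀ γ̂ + λ|β|₁ over ℝ^q, where Γ̂ is symmetric positive semidefinite, and let β* ∈ ℝ^q with support S. If |γ̂ − Γ̂ β*|_∞ ≤ λ/4, then the error vector v = β̂ − β* satisfies the cone condition |v_{S^c}|₁ ≤ 3 |v_S|₁ and the inequality vᵀ Γ̂ v ≤ 2λ |v|₁. -/

import Mathlib

open Matrix

/-!
Comparing the Lasso objective at its minimiser `β̂` with its value at `β*` and expanding the
quadratic term around `β*` gives the basic inequality
`vᵀ Γ̂ v ≤ 2 vᵀ(γ̂ − Γ̂ β*) + λ (|β*|₁ − |β̂|₁)`.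
The noise term is at most `(λ/2)|v|₁` by Hölder, and since `β*` vanishes off `S` the triangle
inequality gives `|β*|₁ − |β̂|₁ ≤ |v_S|₁ − |v_{Sᶜ}|₁`. Hence
`0 ≤ vᵀ Γ̂ v ≤ (3λ/2)|v_S|₁ − (λ/2)|v_{Sᶜ}|₁`, which yields both claims.
-/

section

variable {n : Type*} [Fintype n]

theorem Matrix.IsSymm.dotProduct_mulVec_comm {R : Type*} [CommSemiring R] {A : Matrix n n R}
    (hA : A.IsSymm) (x y : n → R) : x ⬝ᵥ A *ᵥ y = y ⬝ᵥ A *ᵥ x := by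
  rw [dotProduct_mulVec, ← mulVec_transpose, hA.eq, dotProduct_comm]

theorem Matrix.IsSymm.dotProduct_mulVec_add_add {R : Type*} [CommRing R] {A : Matrix n n R}
    (hA : A.IsSymm) (x y : n → R) :
    (x + y) ⬝ᵥ A *ᵥ (x + y) = x ⬝ᵥ A *ᵥ x + 2 * (x ⬝ᵥ A *ᵥ y) + y ⬝ᵥ A *ᵥ y := by
  rw [mulVec_add, add_dotProduct, dotProduct_add, dotProduct_add, hA.dotProduct_mulVec_comm y x]
  ring

theorem dotProduct_le_mul_sum_abs {x y : n → ℝ} {c : ℝ} (hy : ∀ i, |y i| ≤ c) :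
    x ⬝ᵥ y ≤ c * ∑ i, |x i| := by
  rw [dotProduct, Finset.mul_sum]
  refine Finset.sum_le_sum fun i _ => ?_
  calc x i * y i ≤ |x i| * |y i| := by rw [← abs_mul]; exact le_abs_self _
    _ ≤ |x i| * c := by gcongr; exact hy i
    _ = c * |x i| := mul_comm _ _

theorem sum_abs_sub_sum_abs_le_of_support_subset [DecidableEq n] {x y : n → ℝ} {s : Finset n}
    (hy : ∀ i ∉ s, y i = 0) :
    ∑ i, |y i| - ∑ i, |x i| ≤ ∑ i ∈ s, |x i - y i| - ∑ i ∈ sᶜ, |x i - y i| := by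
  have hs : ∑ i ∈ s, |y i| - ∑ i ∈ s, |x i| ≤ ∑ i ∈ s, |x i - y i| := by
    rw [← Finset.sum_sub_distrib]
    gcongr with i
    rw [abs_sub_comm]
    exact abs_sub_abs_le_abs_sub _ _
  have hsc : ∑ i ∈ sᶜ, |x i - y i| = ∑ i ∈ sᶜ, |x i| := by
    refine Finset.sum_congr rfl fun i hi => ?_
    rw [hy i (Finset.mem_compl.mp hi), sub_zero]
  have hyc : ∑ i ∈ sᶜ, |y i| = 0 :=
    Finset.sum_eq_zero fun i hi => by rw [hy i (Finset.mem_compl.mp hi), abs_zero]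
  rw [← Finset.sum_add_sum_compl s (fun i => |y i|), ← Finset.sum_add_sum_compl s (fun i => |x i|)]
  linarith

end

noncomputable def lassoObjective {n : Type*} [Fintype n] (Γ : Matrix n n ℝ) (γ : n → ℝ) (lam : ℝ)
    (β : n → ℝ) : ℝ :=
  β ⬝ᵥ Γ *ᵥ β - 2 * (β ⬝ᵥ γ) + lam * ∑ i, |β i|

theorem lasso_basic_inequality {n : Type*} [Fintype n] {Γ : Matrix n n ℝ} (hΓ : Γ.IsSymm)
    {γ : n → ℝ} {lam : ℝ} {βhat βstar : n → ℝ}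
    (hmin : lassoObjective Γ γ lam βhat ≤ lassoObjective Γ γ lam βstar) :
    (βhat - βstar) ⬝ᵥ Γ *ᵥ (βhat - βstar) ≤
      2 * ((βhat - βstar) ⬝ᵥ (γ - Γ *ᵥ βstar)) + lam * (∑ i, |βstar i| - ∑ i, |βhat i|) := by
  set v := βhat - βstar
  have hexpand := hΓ.dotProduct_mulVec_add_add v βstar
  rw [sub_add_cancel] at hexpand
  have hlin : βhat ⬝ᵥ γ = v ⬝ᵥ γ + βstar ⬝ᵥ γ := by
    rw [← add_dotProduct, sub_add_cancel]
  unfold lassoObjective at hmin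
  rw [dotProduct_sub]
  linarith

theorem lasso_cone_condition_general {q : ℕ} (Γhat : Matrix (Fin q) (Fin q) ℝ)
    (hpsd : Γhat.PosSemidef)
    (γhat βstar : Fin q → ℝ) (lam : ℝ) (hlam : 0 < lam)
    (S : Finset (Fin q)) (hS : ∀ i, i ∈ S ↔ βstar i ≠ 0)
    (hdev : ∀ i, |γhat i - Γhat.mulVec βstar i| ≤ lam / 4)
    (βhat : Fin q → ℝ)
    (hmin : ∀ β : Fin q → ℝ,
      βhat ⬝ᵥ Γhat.mulVec βhat - 2 * (βhat ⬝ᵥ γhat) + lam * ∑ i, |βhat i| ≤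
        β ⬝ᵥ Γhat.mulVec β - 2 * (β ⬝ᵥ γhat) + lam * ∑ i, |β i|) :
    (∑ i ∈ Sᶜ, |βhat i - βstar i|) ≤ 3 * ∑ i ∈ S, |βhat i - βstar i| ∧
      (fun i => βhat i - βstar i) ⬝ᵥ Γhat.mulVec (fun i => βhat i - βstar i) ≤
        2 * lam * ∑ i, |βhat i - βstar i| := by
  have hsymm : Γhat.IsSymm := isHermitian_iff_isSymm.mp hpsd.isHermitian
  have hbasic := lasso_basic_inequality hsymm (hmin βstar)
  have hnoise : (βhat - βstar) ⬝ᵥ (γhat - Γhat *ᵥ βstar) ≤ lam / 4 * ∑ i, |βhat i - βstar i| :=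
    dotProduct_le_mul_sum_abs hdev
  have hl1 := sum_abs_sub_sum_abs_le_of_support_subset (x := βhat)
    fun i hi => not_not.mp (mt (hS i).mpr hi)
  have hnonneg : 0 ≤ (βhat - βstar) ⬝ᵥ Γhat *ᵥ (βhat - βstar) := by
    simpa using hpsd.dotProduct_mulVec_nonneg (βhat - βstar)
  have hsplit := Finset.sum_add_sum_compl S fun i => |βhat i - βstar i|
  have hS_nonneg : 0 ≤ ∑ i ∈ S, |βhat i - βstar i| := Finset.sum_nonneg fun _ _ => abs_nonneg _
  have hSc_nonneg : 0 ≤ ∑ i ∈ Sᶜ, |βhat i - βstar i| := Finset.sum_nonneg fun _ _ => abs_nonneg _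
  have hquad : (βhat - βstar) ⬝ᵥ Γhat *ᵥ (βhat - βstar) ≤
      3 * lam / 2 * ∑ i ∈ S, |βhat i - βstar i| - lam / 2 * ∑ i ∈ Sᶜ, |βhat i - βstar i| := by
    nlinarith [mul_le_mul_of_nonneg_left hl1 hlam.le]
  constructor
  · nlinarith
  · change (βhat - βstar) ⬝ᵥ Γhat *ᵥ (βhat - βstar) ≤ _
    nlinarith

/-- Basic inequality for the Lasso: the error vector `v = β̂ − β*` lies in the
cone `|v_{S^c}|₁ ≤ 3|v_S|₁` and satisfies `vᵀ Γ̂ v ≤ 2λ|v|₁`. -/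
theorem lasso_cone_condition {q : ℕ} (Γhat : Matrix (Fin q) (Fin q) ℝ)
    (hsym : Γhat.IsSymm) (hpsd : Γhat.PosSemidef)
    (γhat βstar : Fin q → ℝ) (lam : ℝ) (hlam : 0 < lam)
    (S : Finset (Fin q)) (hS : ∀ i, i ∈ S ↔ βstar i ≠ 0)
    (hdev : ∀ i, |γhat i - Γhat.mulVec βstar i| ≤ lam / 4)
    (βhat : Fin q → ℝ)
    (hmin : ∀ β : Fin q → ℝ,
      βhat ⬝ᵥ Γhat.mulVec βhat - 2 * (βhat ⬝ᵥ γhat) + lam * ∑ i, |βhat i| ≤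
        β ⬝ᵥ Γhat.mulVec β - 2 * (β ⬝ᵥ γhat) + lam * ∑ i, |β i|) :
    (∑ i ∈ Sᶜ, |βhat i - βstar i|) ≤ 3 * ∑ i ∈ S, |βhat i - βstar i| ∧
      (fun i => βhat i - βstar i) ⬝ᵥ Γhat.mulVec (fun i => βhat i - βstar i) ≤
        2 * lam * ∑ i, |βhat i - βstar i| :=
  lasso_cone_condition_general Γhat hpsd γhat βstar lam hlam S hS hdev βhat hmin
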